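/- Let X, X₁ ∈ ℝ^{N×d}, let c > 0 (playing the role of sλ), suppose d_𝓜(X₁) ≤ c·d_𝓜(X) with d_𝓜(X₁) > 0, and let ρ ∈ (0,1) satisfy ρ(1/c + 1) > 2. Then the expected SkipNode output is strictly farther from 𝓜 than the vanilla output: d_𝓜((1−ρ)X₁ + ρX) / d_𝓜(X₁) ≥ ρ(1/c + 1) − 1 > 1, and in particular d_𝓜((1−ρ)X₁ + ρX) > d_𝓜(X₁). -/

import Mathlib

/-!
`distM e` is the quotient norm of `ℝ^{N×d} ⧸ 𝓜` (Frobenius norm), hence a seminorm. With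
`Y = (1 - ρ) X₁ + ρ X`, the triangle inequality for `ρ X = Y - (1 - ρ) X₁` gives
`ρ d(X) ≤ d(Y) + (1 - ρ) d(X₁)`, and `d(X) ≥ d(X₁) / c` turns this into
`d(Y) ≥ (ρ (1/c + 1) - 1) d(X₁)`.
-/

open scoped BigOperators

/-- The Frobenius norm of a real `N × d` matrix. -/
noncomputable def fNorm {N d : ℕ} (X : Matrix (Fin N) (Fin d) ℝ) : ℝ :=
  Real.sqrt (∑ i, ∑ j, (X i j) ^ 2)

/-- The distance (in Frobenius norm) from a matrix `X` to the subspace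
`𝓜 = {∑ m, e m ⊗ w m | w m ∈ ℝ^d}` determined by the family `e` of vectors in `ℝ^N`. -/
noncomputable def distM {N d M : ℕ} (e : Fin M → Fin N → ℝ)
    (X : Matrix (Fin N) (Fin d) ℝ) : ℝ :=
  sInf {r : ℝ | ∃ w : Fin M → Fin d → ℝ,
    r = fNorm (X - Matrix.of fun i j => ∑ m, e m i * w m j)}

attribute [local instance] Matrix.frobeniusSeminormedAddCommGroup Matrix.frobeniusNormedSpace

lemma norm_sub_le_norm_lineMap {E : Type*} [SeminormedAddCommGroup E] [NormedSpace ℝ E]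
    {ρ : ℝ} (hρ0 : 0 ≤ ρ) (hρ1 : ρ ≤ 1) (x₁ x : E) :
    ρ * ‖x‖ - (1 - ρ) * ‖x₁‖ ≤ ‖(1 - ρ) • x₁ + ρ • x‖ := by
  have h := norm_sub_norm_le (ρ • x) (-((1 - ρ) • x₁))
  rwa [norm_neg, norm_smul, norm_smul, Real.norm_of_nonneg hρ0,
    Real.norm_of_nonneg (sub_nonneg.2 hρ1), sub_neg_eq_add, add_comm] at h

lemma fNorm_eq_frobenius_norm {N d : ℕ} (X : Matrix (Fin N) (Fin d) ℝ) : fNorm X = ‖X‖ := by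
  rw [fNorm, Matrix.frobenius_norm_def, Real.sqrt_eq_rpow]
  simp only [Real.norm_eq_abs, Real.rpow_two, sq_abs]

variable {N d M : ℕ}

noncomputable def sumOuter (e : Fin M → Fin N → ℝ) :
    (Fin M → Fin d → ℝ) →ₗ[ℝ] Matrix (Fin N) (Fin d) ℝ where
  toFun w := Matrix.of fun i j => ∑ m, e m i * w m j
  map_add' w w' := by ext; simp [mul_add, Finset.sum_add_distrib]
  map_smul' t w := by ext; simp [Finset.mul_sum, mul_left_comm]

noncomputable def subspaceM (e : Fin M → Fin N → ℝ) : Submodule ℝ (Matrix (Fin N) (Fin d) ℝ) :=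
  LinearMap.range (sumOuter e)

lemma distM_eq_infDist (e : Fin M → Fin N → ℝ) (X : Matrix (Fin N) (Fin d) ℝ) :
    distM e X = Metric.infDist X (subspaceM (d := d) e) := by
  rw [Metric.infDist_eq_iInf, distM, subspaceM, LinearMap.coe_range]
  simp only [fNorm_eq_frobenius_norm, ← dist_eq_norm]
  rw [iInf, Set.range_comp']
  congr 1
  ext r
  simp only [Set.mem_ofPred_eq, Subtype.range_coe, Set.mem_image, Set.mem_range,
    exists_exists_eq_and]
  exact exists_congr fun w => eq_comm

lemma distM_eq_norm_mk (e : Fin M → Fin N → ℝ) (X : Matrix (Fin N) (Fin d) ℝ) :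
    distM e X = ‖(Submodule.Quotient.mk X : _ ⧸ subspaceM (d := d) e)‖ := by
  rw [distM_eq_infDist]
  exact (QuotientAddGroup.norm_mk (S := (subspaceM e).toAddSubgroup) X).symm

theorem skipNode_strictly_farther_general {N d M : ℕ}
    (e : Fin M → Fin N → ℝ)
    (X X₁ : Matrix (Fin N) (Fin d) ℝ) (c : ℝ) (hc : 0 < c)
    (hX₁ : distM e X₁ ≤ c * distM e X) (hpos : 0 < distM e X₁)
    (ρ : ℝ) (hρ0 : 0 < ρ) (hρ1 : ρ < 1)
    (hcond : ρ * (1 / c + 1) > 2) :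
    (ρ * (1 / c + 1) - 1 ≤ distM e ((1 - ρ) • X₁ + ρ • X) / distM e X₁ ∧
      1 < ρ * (1 / c + 1) - 1) ∧
    distM e X₁ < distM e ((1 - ρ) • X₁ + ρ • X) := by
  have hY : ρ * distM e X - (1 - ρ) * distM e X₁ ≤ distM e ((1 - ρ) • X₁ + ρ • X) := by
    simpa only [distM_eq_norm_mk, Submodule.Quotient.mk_add, Submodule.Quotient.mk_smul]
      using norm_sub_le_norm_lineMap hρ0.le hρ1.le
        (Submodule.Quotient.mk X₁ : _ ⧸ subspaceM e) (Submodule.Quotient.mk X)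
  have hX : distM e X₁ / c ≤ distM e X := (div_le_iff₀' hc).2 hX₁
  have hratio : (ρ * (1 / c + 1) - 1) * distM e X₁ ≤ distM e ((1 - ρ) • X₁ + ρ • X) := by
    calc (ρ * (1 / c + 1) - 1) * distM e X₁
        = ρ * (distM e X₁ / c) - (1 - ρ) * distM e X₁ := by ring
      _ ≤ ρ * distM e X - (1 - ρ) * distM e X₁ := by gcongr
      _ ≤ _ := hY
  have hgt1 : 1 < ρ * (1 / c + 1) - 1 := by linarith
  exact ⟨⟨(le_div_iff₀ hpos).2 hratio, hgt1⟩, (lt_mul_of_one_lt_left hpos hgt1).trans_le hratio⟩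

theorem skipNode_strictly_farther {N d M : ℕ} (hN : 0 < N) (hd : 0 < d)
    (hMpos : 0 < M) (hM : M < N)
    (e : Fin M → Fin N → ℝ)
    (horth : ∀ m m' : Fin M, (∑ i, e m i * e m' i) = if m = m' then 1 else 0)
    (X X₁ : Matrix (Fin N) (Fin d) ℝ) (c : ℝ) (hc : 0 < c)
    (hX₁ : distM e X₁ ≤ c * distM e X) (hpos : 0 < distM e X₁)
    (ρ : ℝ) (hρ0 : 0 < ρ) (hρ1 : ρ < 1)
    (hcond : ρ * (1 / c + 1) > 2) :
    (ρ * (1 / c + 1) - 1 ≤ distM e ((1 - ρ) • X₁ + ρ • X) / distM e X₁ ∧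
      1 < ρ * (1 / c + 1) - 1) ∧
    distM e X₁ < distM e ((1 - ρ) • X₁ + ρ • X) :=
  skipNode_strictly_farther_general e X X₁ c hc hX₁ hpos ρ hρ0 hρ1 hcond
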